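/- Let 1 ≤ i ≤ j ≤ n and let V_• ∈ Z^{i,j} be a flag with V_j ⊄ im(x). Then V_n = im(x) + V_j, and dim(V_ℓ ∩ im(x)) = ℓ − 1 for all j ≤ ℓ ≤ n. -/

import Mathlib

noncomputable section

/-- `x` is the nilpotent linear map on `ℂ^(n-1+s)` with `x e_i = e_{i-(n-1)}` for
`n ≤ i ≤ 2n-2` (1-indexed) and `x e_i = 0` otherwise. Indices of `Fin (n-1+s)` are
0-indexed, so `e_i` (math, 1-indexed) corresponds to `Pi.single ⟨i-1,_⟩ 1`. -/
def IsDeltaMap (n s : ℕ)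
    (x : (Fin (n - 1 + s) → ℂ) →ₗ[ℂ] (Fin (n - 1 + s) → ℂ)) : Prop :=
  ∀ i : Fin (n - 1 + s), x (Pi.single i 1) =
    if n ≤ (i : ℕ) + 1 ∧ (i : ℕ) + 1 ≤ 2 * n - 2 then
      Pi.single
        (⟨(i : ℕ) - (n - 1), Nat.lt_of_le_of_lt (Nat.sub_le _ _) i.isLt⟩ : Fin (n - 1 + s))
        (1 : ℂ)
    else 0

/-- A flag of type `(1^n, s-1)` in `ℂ^(n-1+s)`:
`0 = V 0 ⊆ V 1 ⊆ ⋯ ⊆ V n` with `dim (V j) = j` for `0 ≤ j ≤ n`. -/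
def IsFlag (n s : ℕ) (V : ℕ → Submodule ℂ (Fin (n - 1 + s) → ℂ)) : Prop :=
  V 0 = ⊥ ∧ (∀ j < n, V j ≤ V (j + 1)) ∧ ∀ j ≤ n, Module.finrank ℂ (V j) = j

/-- Membership in `Z^{i,j}`: a flag of type `(1^n,s-1)` with `V_{j-1} ⊆ im x`,
`im x ⊆ V_n` and `x V_n ⊆ V_{i-1}`. -/
def MemZij (n s i j : ℕ)
    (x : (Fin (n - 1 + s) → ℂ) →ₗ[ℂ] (Fin (n - 1 + s) → ℂ))
    (V : ℕ → Submodule ℂ (Fin (n - 1 + s) → ℂ)) : Prop :=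
  IsFlag n s V ∧ V (j - 1) ≤ LinearMap.range x ∧ LinearMap.range x ≤ V n ∧
    Submodule.map x (V n) ≤ V (i - 1)

/-- Membership in `Z^i = Z^{i,i}`. -/
def MemZ (n s i : ℕ)
    (x : (Fin (n - 1 + s) → ℂ) →ₗ[ℂ] (Fin (n - 1 + s) → ℂ))
    (V : ℕ → Submodule ℂ (Fin (n - 1 + s) → ℂ)) : Prop :=
  MemZij n s i i x V

/-- Membership in the Δ-Springer fiber `Y_{n,(1^{n-1}),s}`. -/
def MemY (n s : ℕ)
    (x : (Fin (n - 1 + s) → ℂ) →ₗ[ℂ] (Fin (n - 1 + s) → ℂ))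
    (V : ℕ → Submodule ℂ (Fin (n - 1 + s) → ℂ)) : Prop :=
  IsFlag n s V ∧ LinearMap.range x ≤ V n ∧ ∀ j ≤ n, Submodule.map x (V j) ≤ V j

/-!
The image of `x` contains `e_1, …, e_{n-1}`, so it has dimension at least `n - 1`, and it lies
in the `n`-dimensional space `V_n`: it is either all of `V_n` or a hyperplane in it. A subspace
`V_ℓ ⊆ V_n` that is not contained in `im x` rules out the first case, and a subspace of `V_n`
not contained in a hyperplane spans `V_n` together with it and meets it in codimension one.
-/

open Module

namespace Submodule

variable {K E : Type*} [DivisionRing K] [AddCommGroup E] [Module K E] [FiniteDimensional K E]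
  {U R W : Submodule K E}

theorem sup_eq_of_not_le_of_finrank_le_succ (hU : U ≤ W) (hR : R ≤ W)
    (hdim : finrank K W ≤ finrank K R + 1) (hUR : ¬ U ≤ R) : U ⊔ R = W := by
  have hlt : R < U ⊔ R := lt_of_le_of_ne le_sup_right fun h => hUR (h ▸ le_sup_left)
  have := finrank_lt_finrank_of_lt hlt
  exact eq_of_le_of_finrank_le (sup_le hU hR) (by omega)

theorem finrank_inf_add_one_of_not_le (hU : U ≤ W) (hR : R ≤ W)
    (hdim : finrank K W ≤ finrank K R + 1) (hUR : ¬ U ≤ R) :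
    finrank K ↥(U ⊓ R) + 1 = finrank K U := by
  have hRW : R < W := lt_of_le_of_ne hR fun h => hUR (h ▸ hU)
  have := finrank_lt_finrank_of_lt hRW
  have := finrank_sup_add_finrank_inf_eq U R
  rw [sup_eq_of_not_le_of_finrank_le_succ hU hR hdim hUR] at this
  omega

end Submodule

theorem IsFlag.mono {n s : ℕ} {V : ℕ → Submodule ℂ (Fin (n - 1 + s) → ℂ)} (hV : IsFlag n s V)
    {a b : ℕ} (hab : a ≤ b) (hb : b ≤ n) : V a ≤ V b := by
  refine monotoneOn_of_le_succ Set.ordConnected_Iic (fun k _ _ hk => ?_)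
    (hab.trans hb : a ≤ n) hb hab
  rw [Order.succ_eq_add_one] at hk ⊢
  exact hV.2.1 k (Nat.lt_of_succ_le hk)

theorem IsDeltaMap.le_finrank_range {n s : ℕ} (hs : n - 1 ≤ s)
    {x : (Fin (n - 1 + s) → ℂ) →ₗ[ℂ] (Fin (n - 1 + s) → ℂ)} (hx : IsDeltaMap n s x) :
    n - 1 ≤ finrank ℂ (LinearMap.range x) := by
  have hK : n - 1 ≤ n - 1 + s := Nat.le_add_right _ _
  let e : Fin (n - 1) → (Fin (n - 1 + s) → ℂ) := fun k => Pi.single (Fin.castLE hK k) 1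
  have he : LinearIndependent ℂ e := by
    simpa [e, Function.comp_def] using
      (Pi.basisFun ℂ (Fin (n - 1 + s))).linearIndependent.comp _ (Fin.castLE_injective hK)
  -- `e_{k+1} = x e_{k+n}` for `k < n - 1`
  have he_mem : ∀ k, e k ∈ LinearMap.range x := by
    intro k
    have hk : (k : ℕ) + (n - 1) < n - 1 + s := by omega
    refine ⟨Pi.single ⟨k + (n - 1), hk⟩ 1, ?_⟩
    rw [hx, if_pos (by dsimp only; omega)]
    simp only [e, Fin.castLE, Nat.add_sub_cancel]
  calc n - 1 = finrank ℂ (Submodule.span ℂ (Set.range e)) := by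
        rw [finrank_span_eq_card he, Fintype.card_fin]
    _ ≤ finrank ℂ (LinearMap.range x) :=
        Submodule.finrank_mono (Submodule.span_le.mpr (Set.range_subset_iff.mpr he_mem))

theorem stmt_10_general (n s : ℕ) (hs : n - 1 ≤ s)
    (x : (Fin (n - 1 + s) → ℂ) →ₗ[ℂ] (Fin (n - 1 + s) → ℂ)) (hx : IsDeltaMap n s x)
    (i j : ℕ) (hj : j ≤ n)
    (V : ℕ → Submodule ℂ (Fin (n - 1 + s) → ℂ)) (hV : MemZij n s i j x V)
    (hnot : ¬ V j ≤ LinearMap.range x) :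
    V n = LinearMap.range x ⊔ V j ∧
    ∀ l : ℕ, j ≤ l → l ≤ n →
      Module.finrank ℂ ↥(V l ⊓ LinearMap.range x) = l - 1 := by
  obtain ⟨hflag, -, hxV, -⟩ := hV
  have hdim : finrank ℂ (V n) ≤ finrank ℂ (LinearMap.range x) + 1 := by
    have := hx.le_finrank_range hs
    rw [hflag.2.2 n le_rfl]
    omega
  refine ⟨?_, fun l hjl hln => ?_⟩
  · rw [sup_comm]
    exact (Submodule.sup_eq_of_not_le_of_finrank_le_succ (hflag.mono hj le_rfl) hxV hdim hnot).symm
  · have hnot_l : ¬ V l ≤ LinearMap.range x := fun h => hnot ((hflag.mono hjl hln).trans h)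
    have := Submodule.finrank_inf_add_one_of_not_le (hflag.mono hln le_rfl) hxV hdim hnot_l
    rw [hflag.2.2 l hln] at this
    omega

/-- if `V ∈ Z^{i,j}` (for `1 ≤ i ≤ j ≤ n`) and `V_j ⊄ im x`, then
`V_n = im x + V_j` and `dim (V_ℓ ∩ im x) = ℓ - 1` for all `j ≤ ℓ ≤ n`. -/
theorem stmt_10 (n s : ℕ) (hn : 2 ≤ n) (hs : n - 1 ≤ s)
    (x : (Fin (n - 1 + s) → ℂ) →ₗ[ℂ] (Fin (n - 1 + s) → ℂ)) (hx : IsDeltaMap n s x)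
    (i j : ℕ) (hi : 1 ≤ i) (hij : i ≤ j) (hj : j ≤ n)
    (V : ℕ → Submodule ℂ (Fin (n - 1 + s) → ℂ)) (hV : MemZij n s i j x V)
    (hnot : ¬ V j ≤ LinearMap.range x) :
    V n = LinearMap.range x ⊔ V j ∧
    ∀ l : ℕ, j ≤ l → l ≤ n →
      Module.finrank ℂ ↥(V l ⊓ LinearMap.range x) = l - 1 :=
  stmt_10_general n s hs x hx i j hj V hV hnot

end
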